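/- Let Ω ⊂ ℂ be a bounded, open, simply connected domain, φ : 𝔻 → Ω a conformal mapping, and ρ a density on Ω. Let M(u) = e^{u²} − 1 and Φ(u) = u·log(u + e). Then for every measurable f : 𝔻 → ℝ with ‖f‖_{L^M(𝔻)} < ∞ and ‖J_φ·(ρ∘φ)‖_{L^Φ(𝔻)} < ∞ one has (∫_Ω |f(φ⁻¹(x))|² ρ(x) dx)^{1/2} ≤ √2 · ‖f‖_{L^M(𝔻)} · (‖J_φ·(ρ∘φ)‖_{L^Φ(𝔻)})^{1/2}, where J_φ(y)·(ρ∘φ)(y) = |φ'(y)|²·ρ(φ(y)). (This bounds the norm of the composition operator (φ⁻¹)* : L^M(𝔻) → L²(Ω,ρ).) -/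

import Mathlib

open MeasureTheory Metric Set
open scoped ENNReal NNReal Real

/-- The Luxemburg norm `‖g‖_{L^N(E)} = inf{λ > 0 : ∫_E N(|g|/λ) dx ≤ 1}`. -/
noncomputable def luxemburgNorm (N : ℝ → ℝ) (E : Set ℂ) (g : ℂ → ℝ) : ℝ :=
  sInf {l : ℝ | 0 < l ∧ ∫⁻ x in E, ENNReal.ofReal (N (|g x| / l)) ≤ 1}

/-- The Young function `M(u) = e^{u²} − 1`. -/
noncomputable def Mfun (u : ℝ) : ℝ := Real.exp (u ^ 2) - 1

/-- The Young function `Φ(u) = u·log(u + e)`. -/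
noncomputable def Phifun (u : ℝ) : ℝ := u * Real.log (u + Real.exp 1)

/-!
Substituting `x = φ y` turns the weighted `L²` integral into `∫_𝔻 f² · |φ'|² (ρ ∘ φ)`, because the
real Jacobian determinant of a holomorphic map is `|φ'|²`. Young's inequality
`s t ≤ (eˢ - 1) + t log (t + e)` for the complementary pair `M`, `Φ`, applied to `s = f²/l²` and
`t = g/m`, gives `∫ f² g ≤ l² m (∫ M(|f|/l) + ∫ Φ(|g|/m)) ≤ 2 l² m` for all admissible `l`, `m`;
since the bound is continuous in `l` and `m`, it persists at the infima, the Luxemburg norms.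
-/

theorem mul_le_exp_sub_one_add_mul_log {s v : ℝ} (hs : 0 ≤ s) (hv : 0 ≤ v) :
    s * v ≤ (Real.exp s - 1) + v * Real.log (v + Real.exp 1) := by
  have he : (1 : ℝ) ≤ Real.exp 1 := Real.one_le_exp zero_le_one
  rcases le_or_gt v 1 with hv1 | hv1
  · have h₁ := Real.add_one_le_exp s
    have h₂ : 0 ≤ Real.log (v + Real.exp 1) := Real.log_nonneg (by linarith)
    nlinarith
  · have hv0 : 0 < v := zero_lt_one.trans hv1
    -- the tangent line of `exp` at `log v`
    have h₁ : v * (s - Real.log v + 1) ≤ Real.exp s := by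
      have := mul_le_mul_of_nonneg_left (Real.add_one_le_exp (s - Real.log v)) hv0.le
      rwa [Real.exp_sub, Real.exp_log hv0, mul_div_cancel₀ _ hv0.ne'] at this
    have h₂ : Real.log v ≤ Real.log (v + Real.exp 1) := Real.log_le_log hv0 (by linarith)
    nlinarith

theorem Mfun_nonneg (u : ℝ) : 0 ≤ Mfun u :=
  sub_nonneg.2 (Real.one_le_exp (sq_nonneg u))

theorem Phifun_nonneg {u : ℝ} (hu : 0 ≤ u) : 0 ≤ Phifun u :=
  mul_nonneg hu (Real.log_nonneg (le_add_of_nonneg_of_le hu (Real.one_le_exp zero_le_one)))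

theorem sq_mul_abs_le_mul_Mfun_add_Phifun {l m : ℝ} (hl : 0 < l) (hm : 0 < m) (a b : ℝ) :
    a ^ 2 * |b| ≤ l ^ 2 * m * (Mfun (|a| / l) + Phifun (|b| / m)) := by
  have hyoung := mul_le_exp_sub_one_add_mul_log (sq_nonneg (|a| / l))
    (div_nonneg (abs_nonneg b) hm.le)
  calc a ^ 2 * |b| = l ^ 2 * m * ((|a| / l) ^ 2 * (|b| / m)) := by
        rw [div_pow, sq_abs]; field_simp
    _ ≤ l ^ 2 * m * (Mfun (|a| / l) + Phifun (|b| / m)) := by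
        unfold Mfun Phifun; gcongr

theorem lintegral_enorm_sq_mul_le {α : Type*} [MeasurableSpace α] {μ : Measure α}
    {f g : α → ℝ} (hf : Measurable f) {l m : ℝ} (hl : 0 < l) (hm : 0 < m)
    (hfl : ∫⁻ x, ENNReal.ofReal (Mfun (|f x| / l)) ∂μ ≤ 1)
    (hgm : ∫⁻ x, ENNReal.ofReal (Phifun (|g x| / m)) ∂μ ≤ 1) :
    ∫⁻ x, ‖f x ^ 2 * g x‖ₑ ∂μ ≤ ENNReal.ofReal (2 * l ^ 2 * m) := by
  have hpt : ∀ x, ‖f x ^ 2 * g x‖ₑ ≤ ENNReal.ofReal (l ^ 2 * m) *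
      (ENNReal.ofReal (Mfun (|f x| / l)) + ENNReal.ofReal (Phifun (|g x| / m))) := fun x => by
    rw [← ENNReal.ofReal_add (Mfun_nonneg _) (Phifun_nonneg (by positivity)),
      ← ENNReal.ofReal_mul (by positivity), Real.enorm_eq_ofReal_abs, abs_mul,
      abs_of_nonneg (sq_nonneg _)]
    exact ENNReal.ofReal_le_ofReal (sq_mul_abs_le_mul_Mfun_add_Phifun hl hm _ _)
  have hMmeas : Measurable fun x => ENNReal.ofReal (Mfun (|f x| / l)) := by
    unfold Mfun; fun_prop
  calc ∫⁻ x, ‖f x ^ 2 * g x‖ₑ ∂μ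
      ≤ ∫⁻ x, ENNReal.ofReal (l ^ 2 * m) *
          (ENNReal.ofReal (Mfun (|f x| / l)) + ENNReal.ofReal (Phifun (|g x| / m))) ∂μ :=
        lintegral_mono hpt
    _ = ENNReal.ofReal (l ^ 2 * m) * (∫⁻ x, ENNReal.ofReal (Mfun (|f x| / l)) ∂μ +
          ∫⁻ x, ENNReal.ofReal (Phifun (|g x| / m)) ∂μ) := by
        rw [lintegral_const_mul' _ _ ENNReal.ofReal_ne_top, lintegral_add_left hMmeas]
    _ ≤ ENNReal.ofReal (l ^ 2 * m) * (1 + 1) := by gcongr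
    _ = ENNReal.ofReal (2 * l ^ 2 * m) := by
        rw [one_add_one_eq_two, mul_assoc, ENNReal.ofReal_mul zero_le_two, ENNReal.ofReal_ofNat,
          mul_comm]

theorem le_apply_csInf_of_forall_le {α β : Type*} [ConditionallyCompleteLinearOrder α]
    [TopologicalSpace α] [OrderTopology α] [Preorder β] [TopologicalSpace β]
    [OrderClosedTopology β] {S : Set α} (hS : S.Nonempty) (hSb : BddBelow S) {f : α → β}
    (hf : Continuous f) {x : β} (h : ∀ l ∈ S, x ≤ f l) : x ≤ f (sInf S) :=
  closure_minimal h (isClosed_le continuous_const hf) (csInf_mem_closure hS hSb)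

theorem luxemburgNorm_nonneg (N : ℝ → ℝ) (E : Set ℂ) (g : ℂ → ℝ) :
    0 ≤ luxemburgNorm N E g :=
  Real.sInf_nonneg fun _ hl => hl.1.le

theorem lintegral_enorm_sq_mul_le_luxemburgNorm {E : Set ℂ} {f g : ℂ → ℝ} (hf : Measurable f)
    (hfM : {l : ℝ | 0 < l ∧ ∫⁻ x in E, ENNReal.ofReal (Mfun (|f x| / l)) ≤ 1}.Nonempty)
    (hgΦ : {m : ℝ | 0 < m ∧ ∫⁻ x in E, ENNReal.ofReal (Phifun (|g x| / m)) ≤ 1}.Nonempty) :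
    ∫⁻ x in E, ‖f x ^ 2 * g x‖ₑ ≤
      ENNReal.ofReal (2 * luxemburgNorm Mfun E f ^ 2 * luxemburgNorm Phifun E g) := by
  refine le_apply_csInf_of_forall_le hfM ⟨0, fun _ hl => hl.1.le⟩
    (f := fun l => ENNReal.ofReal (2 * l ^ 2 * luxemburgNorm Phifun E g))
    (ENNReal.continuous_ofReal.comp (by fun_prop)) fun l hl => ?_
  refine le_apply_csInf_of_forall_le hgΦ ⟨0, fun _ hm => hm.1.le⟩
    (f := fun m => ENNReal.ofReal (2 * l ^ 2 * m))
    (ENNReal.continuous_ofReal.comp (by fun_prop)) fun m hm => ?_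
  exact lintegral_enorm_sq_mul_le hf hl.1 hm.1 hl.2 hm.2

theorem Complex.det_restrictScalars_toSpanSingleton (c : ℂ) :
    ((ContinuousLinearMap.toSpanSingleton ℂ c).restrictScalars ℝ).det = ‖c‖ ^ 2 := by
  simp [ContinuousLinearMap.det, LinearMap.det_restrictScalars, Algebra.norm_complex_eq,
    Complex.normSq_eq_norm_sq]

theorem Complex.lintegral_image_eq_lintegral_enorm_deriv_sq_mul {s : Set ℂ} {f f' : ℂ → ℂ}
    (hs : MeasurableSet s) (hf' : ∀ x ∈ s, HasDerivWithinAt f (f' x) s x) (hf : InjOn f s)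
    (G : ℂ → ℝ≥0∞) :
    ∫⁻ x in f '' s, G x = ∫⁻ x in s, ‖f' x‖ₑ ^ 2 * G (f x) := by
  rw [lintegral_image_eq_lintegral_abs_det_fderiv_mul volume hs
    (fun x hx => (hf' x hx).hasFDerivWithinAt.restrictScalars ℝ) hf G]
  congr! 3 with x
  rw [Complex.det_restrictScalars_toSpanSingleton, abs_of_nonneg (by positivity),
    ENNReal.ofReal_pow (norm_nonneg _), ofReal_norm]

theorem composition_operator_orlicz_to_weighted_L2_general
    (Ω : Set ℂ)
    (φ φinv : ℂ → ℂ)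
    (hφdiff : DifferentiableOn ℂ φ (ball (0:ℂ) 1))
    (hφbij : Set.BijOn φ (ball (0:ℂ) 1) Ω)
    (hφinv : Set.InvOn φinv φ (ball (0:ℂ) 1) Ω)
    (ρ : ℂ → ℝ)
    (f : ℂ → ℝ) (hfm : Measurable f)
    (hfM : {l : ℝ | 0 < l ∧
      ∫⁻ y in ball (0:ℂ) 1, ENNReal.ofReal (Mfun (|f y| / l)) ≤ 1}.Nonempty)
    (hJρ : {l : ℝ | 0 < l ∧
      ∫⁻ y in ball (0:ℂ) 1,
        ENNReal.ofReal (Phifun (|‖deriv φ y‖ ^ 2 * ρ (φ y)| / l)) ≤ 1}.Nonempty) :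
    (∫ x in Ω, (f (φinv x)) ^ 2 * ρ x) ^ ((1:ℝ)/2) ≤
      Real.sqrt 2 * luxemburgNorm Mfun (ball (0:ℂ) 1) f *
        Real.sqrt (luxemburgNorm Phifun (ball (0:ℂ) 1)
          (fun y => ‖deriv φ y‖ ^ 2 * ρ (φ y))) := by
  set A := luxemburgNorm Mfun (ball (0:ℂ) 1) f
  set B := luxemburgNorm Phifun (ball (0:ℂ) 1) fun y => ‖deriv φ y‖ ^ 2 * ρ (φ y)
  have hA : 0 ≤ A := luxemburgNorm_nonneg _ _ _
  have hB : 0 ≤ B := luxemburgNorm_nonneg _ _ _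
  have hderiv : ∀ y ∈ ball (0:ℂ) 1, HasDerivWithinAt φ (deriv φ y) (ball 0 1) y := fun y hy =>
    ((hφdiff y hy).differentiableAt (isOpen_ball.mem_nhds hy)).hasDerivAt.hasDerivWithinAt
  have hchange : ∫⁻ x in Ω, ‖f (φinv x) ^ 2 * ρ x‖ₑ =
      ∫⁻ y in ball 0 1, ‖f y ^ 2 * (‖deriv φ y‖ ^ 2 * ρ (φ y))‖ₑ := by
    rw [← hφbij.image_eq, Complex.lintegral_image_eq_lintegral_enorm_deriv_sq_mul
      measurableSet_ball hderiv hφbij.injOn]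
    refine setLIntegral_congr_fun measurableSet_ball fun y hy => ?_
    simp only [hφinv.1 hy, enorm_mul, enorm_pow, enorm_norm]
    ring
  have hI : ∫ x in Ω, f (φinv x) ^ 2 * ρ x ≤ 2 * A ^ 2 * B := by
    have := (Real.ofReal_le_enorm _).trans <| (enorm_integral_le_lintegral_enorm _).trans <|
      hchange ▸ lintegral_enorm_sq_mul_le_luxemburgNorm hfm hfM hJρ
    rwa [ENNReal.ofReal_le_ofReal_iff (by positivity)] at this
  rw [← Real.sqrt_eq_rpow]
  calc √(∫ x in Ω, f (φinv x) ^ 2 * ρ x) ≤ √(2 * A ^ 2 * B) := Real.sqrt_le_sqrt hI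
    _ = √2 * A * √B := by
      rw [Real.sqrt_mul (by positivity), Real.sqrt_mul zero_le_two, Real.sqrt_sq hA]

/-- Norm bound for the composition operator
`(φ⁻¹)* : L^M(𝔻) → L²(Ω,ρ)`:
`‖f∘φ⁻¹‖_{L²(Ω,ρ)} ≤ √2 · ‖f‖_{L^M(𝔻)} · ‖J_φ·(ρ∘φ)‖_{L^Φ(𝔻)}^{1/2}`. -/
theorem composition_operator_orlicz_to_weighted_L2
    (Ω : Set ℂ) (hΩopen : IsOpen Ω) (hΩbdd : Bornology.IsBounded Ω)
    (hΩsc : SimplyConnectedSpace Ω)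
    (φ φinv : ℂ → ℂ)
    (hφdiff : DifferentiableOn ℂ φ (ball (0:ℂ) 1))
    (hφderiv : ∀ y ∈ ball (0:ℂ) 1, deriv φ y ≠ 0)
    (hφbij : Set.BijOn φ (ball (0:ℂ) 1) Ω)
    (hφinv : Set.InvOn φinv φ (ball (0:ℂ) 1) Ω)
    (ρ : ℂ → ℝ) (hρcont : ContinuousOn ρ Ω) (hρpos : ∀ x ∈ Ω, 0 < ρ x)
    (hρint : IntegrableOn ρ Ω)
    (f : ℂ → ℝ) (hfm : Measurable f)
    (hfM : {l : ℝ | 0 < l ∧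
      ∫⁻ y in ball (0:ℂ) 1, ENNReal.ofReal (Mfun (|f y| / l)) ≤ 1}.Nonempty)
    (hJρ : {l : ℝ | 0 < l ∧
      ∫⁻ y in ball (0:ℂ) 1,
        ENNReal.ofReal (Phifun (|‖deriv φ y‖ ^ 2 * ρ (φ y)| / l)) ≤ 1}.Nonempty) :
    (∫ x in Ω, (f (φinv x)) ^ 2 * ρ x) ^ ((1:ℝ)/2) ≤
      Real.sqrt 2 * luxemburgNorm Mfun (ball (0:ℂ) 1) f *
        Real.sqrt (luxemburgNorm Phifun (ball (0:ℂ) 1)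
          (fun y => ‖deriv φ y‖ ^ 2 * ρ (φ y))) :=
  composition_operator_orlicz_to_weighted_L2_general Ω φ φinv hφdiff hφbij hφinv ρ f hfm hfM hJρ
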